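/- arXiv:2409.04144 — 4 statements merged into one kernel-verified Lean document; each statement's English description precedes it below -/
import Mathlib

section
/- Let Q, R, X, P be symmetric real matrices (Q, X, P ∈ ℝ^{n×n}, R ∈ ℝ^{m×m}), let A ∈ ℝ^{n×n}, B ∈ ℝ^{n×m}, and let K = diag(K₁, K₂) be block-diagonal with K₁ ∈ ℝ^{m₁×n₁}, K₂ ∈ ℝ^{m₂×n₂}. Partition X = [X₁₁ X₁₂; X₁₂ᵀ X₂₂] conformably with (n₁, n₂), and define Υ = R + BᵀPB and M = BᵀPA, partitioned as Υ = [Υ₁₁ Υ₁₂; Υ₁₂ᵀ Υ₂₂] and M = [M₁₁ M₁₂; M₂₁ M₂₂]. Then for every direction D ∈ ℝ^{m₁×n₁}, the derivative at t = 0 of the map t ↦ tr[(Q + K_tᵀRK_t)X + (A+BK_t)X(A+BK_t)ᵀP], where K_t = diag(K₁ + tD, K₂), equals 2 tr( Dᵀ ( Υ₁₁K₁X₁₁ + M₁₁X₁₁ + Υ₁₂K₂X₁₂ᵀ + M₁₂X₁₂ᵀ ) ). -/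
open Matrix

private lemma my_trace_fromBlocks {p q : Type*} [Fintype p] [Fintype q]
    (A : Matrix p p ℝ) (B : Matrix p q ℝ) (C : Matrix q p ℝ) (D : Matrix q q ℝ) :
    (Matrix.fromBlocks A B C D).trace = A.trace + D.trace := by
  simp [Matrix.trace, Matrix.diag, Fintype.sum_sum_type, Matrix.fromBlocks]

/-- The directional derivative of the Hamiltonian
`K ↦ tr[(Q + KᵀRK)X + (A+BK)X(A+BK)ᵀP]` at `K = diag(K₁,K₂)` in a direction
`D` placed in the (1,1) block equals
`2 tr(Dᵀ(Υ₁₁K₁X₁₁ + M₁₁X₁₁ + Υ₁₂K₂X₁₂ᵀ + M₁₂X₁₂ᵀ))`. -/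
theorem hamiltonian_directional_derivative_K1
    {n₁ n₂ m₁ m₂ : ℕ}
    (Q P X : Matrix (Fin n₁ ⊕ Fin n₂) (Fin n₁ ⊕ Fin n₂) ℝ)
    (R Υ : Matrix (Fin m₁ ⊕ Fin m₂) (Fin m₁ ⊕ Fin m₂) ℝ)
    (M : Matrix (Fin m₁ ⊕ Fin m₂) (Fin n₁ ⊕ Fin n₂) ℝ)
    (A : Matrix (Fin n₁ ⊕ Fin n₂) (Fin n₁ ⊕ Fin n₂) ℝ)
    (B : Matrix (Fin n₁ ⊕ Fin n₂) (Fin m₁ ⊕ Fin m₂) ℝ)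
    (K₁ : Matrix (Fin m₁) (Fin n₁) ℝ) (K₂ : Matrix (Fin m₂) (Fin n₂) ℝ)
    (X11 : Matrix (Fin n₁) (Fin n₁) ℝ) (X12 : Matrix (Fin n₁) (Fin n₂) ℝ)
    (X22 : Matrix (Fin n₂) (Fin n₂) ℝ)
    (Υ11 : Matrix (Fin m₁) (Fin m₁) ℝ) (Υ12 : Matrix (Fin m₁) (Fin m₂) ℝ)
    (Υ22 : Matrix (Fin m₂) (Fin m₂) ℝ)
    (M11 : Matrix (Fin m₁) (Fin n₁) ℝ) (M12 : Matrix (Fin m₁) (Fin n₂) ℝ)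
    (M21 : Matrix (Fin m₂) (Fin n₁) ℝ) (M22 : Matrix (Fin m₂) (Fin n₂) ℝ)
    (hQ : Qᵀ = Q) (hR : Rᵀ = R) (hP : Pᵀ = P)
    (hX11 : X11ᵀ = X11) (hX22 : X22ᵀ = X22)
    (hX : X = Matrix.fromBlocks X11 X12 X12ᵀ X22)
    (hΥ : Υ = R + Bᵀ * P * B)
    (hΥblocks : Υ = Matrix.fromBlocks Υ11 Υ12 Υ12ᵀ Υ22)
    (hM : M = Bᵀ * P * A)
    (hMblocks : M = Matrix.fromBlocks M11 M12 M21 M22)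
    (D : Matrix (Fin m₁) (Fin n₁) ℝ) :
    HasDerivAt
      (fun t : ℝ =>
        Matrix.trace
          ((Q + (Matrix.fromBlocks (K₁ + t • D) 0 0 K₂)ᵀ * R *
              Matrix.fromBlocks (K₁ + t • D) 0 0 K₂) * X +
            (A + B * Matrix.fromBlocks (K₁ + t • D) 0 0 K₂) * X *
              (A + B * Matrix.fromBlocks (K₁ + t • D) 0 0 K₂)ᵀ * P))
      (2 * Matrix.trace
        (Dᵀ * (Υ11 * K₁ * X11 + M11 * X11 + Υ12 * K₂ * X12ᵀ + M12 * X12ᵀ)))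
      0 := by
  classical
  set K₀ : Matrix (Fin m₁ ⊕ Fin m₂) (Fin n₁ ⊕ Fin n₂) ℝ := Matrix.fromBlocks K₁ 0 0 K₂ with hK₀
  set E : Matrix (Fin m₁ ⊕ Fin m₂) (Fin n₁ ⊕ Fin n₂) ℝ := Matrix.fromBlocks D 0 0 0 with hE
  have hXsym : Xᵀ = X := by
    rw [hX, Matrix.fromBlocks_transpose, hX11, hX22, Matrix.transpose_transpose]
  have hblk : ∀ t : ℝ, Matrix.fromBlocks (K₁ + t • D) 0 0 K₂ = K₀ + t • E := by
    intro t
    rw [hK₀, hE]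
    ext i j
    cases i <;> cases j <;> simp [Matrix.fromBlocks]
  set S : Matrix (Fin n₁ ⊕ Fin n₂) (Fin n₁ ⊕ Fin n₂) ℝ := A + B * K₀ with hS
  set c0 : ℝ := Matrix.trace ((Q + K₀ᵀ * R * K₀) * X + S * X * Sᵀ * P) with hc0
  set c1 : ℝ := Matrix.trace (Eᵀ * R * K₀ * X) + Matrix.trace (K₀ᵀ * R * E * X)
      + Matrix.trace (B * E * X * Sᵀ * P) + Matrix.trace (S * X * Eᵀ * Bᵀ * P) with hc1
  set c2 : ℝ := Matrix.trace (Eᵀ * R * E * X) + Matrix.trace (B * E * X * Eᵀ * Bᵀ * P) with hc2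
  have key : (fun t : ℝ =>
      Matrix.trace
        ((Q + (Matrix.fromBlocks (K₁ + t • D) 0 0 K₂)ᵀ * R *
            Matrix.fromBlocks (K₁ + t • D) 0 0 K₂) * X +
          (A + B * Matrix.fromBlocks (K₁ + t • D) 0 0 K₂) * X *
            (A + B * Matrix.fromBlocks (K₁ + t • D) 0 0 K₂)ᵀ * P))
      = fun t : ℝ => c0 + t * c1 + t ^ 2 * c2 := by
    funext t
    rw [hblk t]
    have hSrw : A + B * (K₀ + t • E) = S + t • (B * E) := by
      rw [hS, Matrix.mul_add, Matrix.mul_smul, add_assoc]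
    rw [hSrw]
    simp only [Matrix.transpose_add, Matrix.transpose_smul, Matrix.add_mul, Matrix.mul_add,
      Matrix.smul_mul, Matrix.mul_smul, Matrix.trace_add, Matrix.trace_smul, smul_smul,
      smul_eq_mul, Matrix.transpose_mul, hc0, hc1, hc2, hS]
    ring_nf
    simp only [Matrix.mul_assoc, Matrix.add_mul, Matrix.mul_add, Matrix.trace_add]
  rw [key]
  have hderiv : HasDerivAt (fun t : ℝ => c0 + t * c1 + t ^ 2 * c2) c1 0 := by
    have h1 : HasDerivAt (fun t : ℝ => c0 + t * c1 + t ^ 2 * c2)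
        (0 + 1 * c1 + (↑2 * (0:ℝ) ^ (2 - 1)) * c2) 0 :=
      ((hasDerivAt_const 0 c0).add ((hasDerivAt_id 0).mul_const c1)).add
        ((hasDerivAt_pow 2 0).mul_const c2)
    simpa using h1
  have hval : c1 = 2 * Matrix.trace
      (Dᵀ * (Υ11 * K₁ * X11 + M11 * X11 + Υ12 * K₂ * X12ᵀ + M12 * X12ᵀ)) := by
    have t2 : Matrix.trace (K₀ᵀ * R * E * X) = Matrix.trace (Eᵀ * R * K₀ * X) := by
      rw [← Matrix.trace_transpose (K₀ᵀ * R * E * X)]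
      simp only [Matrix.transpose_mul, Matrix.transpose_transpose, hXsym, hR]
      rw [Matrix.trace_mul_comm]
      rw [Matrix.trace_mul_comm]
      simp only [Matrix.mul_assoc]
      rw [Matrix.trace_mul_comm]; simp only [Matrix.mul_assoc]
    have t3 : Matrix.trace (B * E * X * Sᵀ * P) = Matrix.trace (Eᵀ * (Bᵀ * P * S) * X) := by
      rw [← Matrix.trace_transpose (B * E * X * Sᵀ * P)]
      simp only [Matrix.transpose_mul, Matrix.transpose_transpose, hXsym, hP]
      simp only [Matrix.mul_assoc]
      rw [Matrix.trace_mul_comm]; simp only [Matrix.mul_assoc]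
      rw [Matrix.trace_mul_comm]; simp only [Matrix.mul_assoc]
      rw [Matrix.trace_mul_comm]; simp only [Matrix.mul_assoc]
    have t4 : Matrix.trace (S * X * Eᵀ * Bᵀ * P) = Matrix.trace (Eᵀ * (Bᵀ * P * S) * X) := by
      simp only [Matrix.mul_assoc]
      rw [Matrix.trace_mul_comm]; simp only [Matrix.mul_assoc]
      rw [Matrix.trace_mul_comm]; simp only [Matrix.mul_assoc]
    have t1 : Matrix.trace (Eᵀ * R * K₀ * X) + Matrix.trace (Eᵀ * (Bᵀ * P * S) * X)
        = Matrix.trace (Eᵀ * (Υ * K₀ + M) * X) := by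
      rw [hΥ, hM, hS]
      simp only [Matrix.add_mul, Matrix.mul_add, Matrix.trace_add, Matrix.mul_assoc]
      ring
    have hmain : c1 = 2 * Matrix.trace (Eᵀ * (Υ * K₀ + M) * X) := by
      rw [hc1, t2, t3, t4, ← t1]; ring
    have hblocktr : Matrix.trace (Eᵀ * (Υ * K₀ + M) * X)
        = Matrix.trace (Dᵀ * (Υ11 * K₁ * X11 + M11 * X11 + Υ12 * K₂ * X12ᵀ + M12 * X12ᵀ)) := by
      rw [hΥblocks, hMblocks, hX, hK₀, hE]
      simp only [Matrix.fromBlocks_transpose, Matrix.fromBlocks_multiply, Matrix.fromBlocks_add,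
        my_trace_fromBlocks, Matrix.transpose_zero, Matrix.mul_zero, Matrix.zero_mul,
        add_zero, zero_add]
      simp only [Matrix.mul_add, Matrix.add_mul, Matrix.mul_assoc, Matrix.trace_add, Matrix.trace_zero, add_zero]
      ring
    rw [hmain, hblocktr]
  rw [← hval]
  exact hderiv
end

section
/- Let Q, R, X, P be symmetric real matrices (Q, X, P ∈ ℝ^{n×n}, R ∈ ℝ^{m×m}), let A ∈ ℝ^{n×n}, B ∈ ℝ^{n×m}, and let K = diag(K₁, K₂) be block-diagonal with K₁ ∈ ℝ^{m₁×n₁}, K₂ ∈ ℝ^{m₂×n₂}. Partition X = [X₁₁ X₁₂; X₁₂ᵀ X₂₂] conformably with (n₁, n₂), and define Υ = R + BᵀPB and M = BᵀPA, partitioned as Υ = [Υ₁₁ Υ₁₂; Υ₁₂ᵀ Υ₂₂] and M = [M₁₁ M₁₂; M₂₁ M₂₂]. Then for every direction D ∈ ℝ^{m₂×n₂}, the derivative at t = 0 of the map t ↦ tr[(Q + K_tᵀRK_t)X + (A+BK_t)X(A+BK_t)ᵀP], where K_t = diag(K₁, K₂ + tD), equals 2 tr( Dᵀ ( Υ₂₂K₂X₂₂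 + M₂₂X₂₂ + Υ₁₂ᵀK₁X₁₂ + M₂₁X₁₂ ) ). -/
/-!
Along the line `K + t E` the Hamiltonian is a quadratic polynomial in `t`; cycling traces and
using the symmetry of `R`, `P` and `X`, its linear coefficient is `2 tr(Eᵀ(ΥK + M)X)`. For
`K = diag(K₁, K₂)` and `E = diag(0, D)` the first block row of `Eᵀ` vanishes, so this trace
is `tr(Dᵀ((ΥK + M)₂₁X₁₂ + (ΥK + M)₂₂X₂₂))`, where `(ΥK + M)₂₁ = Υ₁₂ᵀK₁ + M₂₁` and
`(ΥK + M)₂₂ = Υ₂₂K₂ + M₂₂`.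
-/

open Matrix

namespace Matrix

variable {α p q r s : Type*} [Fintype p] [Fintype q] [Fintype r] [Fintype s]

theorem trace_fromBlocks [AddCommMonoid α] (A : Matrix p p α) (B : Matrix p q α)
    (C : Matrix q p α) (D : Matrix q q α) : trace (fromBlocks A B C D) = trace A + trace D := by
  simp [trace, Fintype.sum_sum_type]

theorem trace_fromBlocks_zero_transpose_mul_mul [Semiring α]
    (D : Matrix r s α) (N₁₁ : Matrix p q α) (N₁₂ : Matrix p s α) (N₂₁ : Matrix r q α)
    (N₂₂ : Matrix r s α) (X₁₁ : Matrix q q α) (X₁₂ : Matrix q s α) (X₂₁ : Matrix s q α)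
    (X₂₂ : Matrix s s α) :
    -- without the ascription `*` elaborates as `CStarMatrix` multiplication
    trace ((fromBlocks 0 0 0 D : Matrix (p ⊕ r) (q ⊕ s) α)ᵀ * fromBlocks N₁₁ N₁₂ N₂₁ N₂₂ *
        fromBlocks X₁₁ X₁₂ X₂₁ X₂₂) =
      trace (Dᵀ * (N₂₁ * X₁₂ + N₂₂ * X₂₂)) := by
  rw [fromBlocks_transpose, fromBlocks_multiply, fromBlocks_multiply, trace_fromBlocks]
  simp [Matrix.mul_add, Matrix.mul_assoc]

theorem trace_transpose_mul_mul_mul_comm [CommSemiring α] {S : Matrix p p α}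
    {X : Matrix q q α} (hS : Sᵀ = S) (hX : Xᵀ = X) (U V : Matrix p q α) :
    trace (Vᵀ * S * U * X) = trace (Uᵀ * S * V * X) := by
  rw [← trace_transpose]
  simp only [transpose_mul, transpose_transpose, hS, hX]
  rw [trace_mul_comm]
  simp only [Matrix.mul_assoc]

theorem trace_quadratic_add_smul [CommSemiring α] {S : Matrix p p α} {X : Matrix q q α}
    (hS : Sᵀ = S) (hX : Xᵀ = X) (U V : Matrix p q α) (t : α) :
    trace ((U + t • V)ᵀ * S * (U + t • V) * X) =
      trace (Uᵀ * S * U * X) + 2 * t * trace (Vᵀ * S * U * X) +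
        t ^ 2 * trace (Vᵀ * S * V * X) := by
  have := trace_transpose_mul_mul_mul_comm hS hX U V
  simp only [transpose_add, transpose_smul, Matrix.add_mul, Matrix.mul_add, Matrix.smul_mul,
    Matrix.mul_smul, trace_add, trace_smul, smul_eq_mul]
  rw [this]
  ring

end Matrix

theorem hasDerivAt_quadratic_zero (a b c : ℝ) :
    HasDerivAt (fun t : ℝ => a + 2 * t * b + t ^ 2 * c) (2 * b) 0 := by
  have h := (((hasDerivAt_id (0 : ℝ)).const_mul (2 : ℝ)).mul_const b |>.const_add a).add
    ((hasDerivAt_pow 2 (0 : ℝ)).mul_const c)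
  exact h.congr_deriv (by simp)

section Hamiltonian

variable {n m : Type*} [Fintype n] [Fintype m]

def hamiltonian (Q X P A : Matrix n n ℝ) (R : Matrix m m ℝ) (B : Matrix n m ℝ)
    (K : Matrix m n ℝ) : ℝ :=
  trace ((Q + Kᵀ * R * K) * X + (A + B * K) * X * (A + B * K)ᵀ * P)

variable {Q X P A : Matrix n n ℝ} {R : Matrix m m ℝ} {B : Matrix n m ℝ}

theorem hamiltonian_eq_trace_add (K : Matrix m n ℝ) :
    hamiltonian Q X P A R B K =
      trace (Q * X) + trace (Kᵀ * R * K * X) + trace ((A + B * K)ᵀ * P * (A + B * K) * X) := by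
  have hcycle : trace ((A + B * K) * X * (A + B * K)ᵀ * P) =
      trace ((A + B * K)ᵀ * P * (A + B * K) * X) := by
    rw [trace_mul_cycle, trace_mul_cycle]
    simp only [Matrix.mul_assoc]
  rw [hamiltonian, Matrix.add_mul, trace_add, trace_add, hcycle]

theorem hamiltonian_add_smul (hR : Rᵀ = R) (hX : Xᵀ = X) (hP : Pᵀ = P) (K E : Matrix m n ℝ)
    (t : ℝ) :
    hamiltonian Q X P A R B (K + t • E) =
      hamiltonian Q X P A R B K + 2 * t * trace (Eᵀ * ((R + Bᵀ * P * B) * K + Bᵀ * P * A) * X) +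
        t ^ 2 * trace (Eᵀ * (R + Bᵀ * P * B) * E * X) := by
  have hline : A + B * (K + t • E) = A + B * K + t • (B * E) := by
    rw [Matrix.mul_add, Matrix.mul_smul, add_assoc]
  rw [hamiltonian_eq_trace_add, hamiltonian_eq_trace_add, hline, trace_quadratic_add_smul hR hX,
    trace_quadratic_add_smul hP hX]
  simp only [transpose_mul, Matrix.mul_add, Matrix.add_mul, trace_add, Matrix.mul_assoc]
  ring

theorem hasDerivAt_hamiltonian_add_smul (hR : Rᵀ = R) (hX : Xᵀ = X) (hP : Pᵀ = P)
    (K E : Matrix m n ℝ) :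
    HasDerivAt (fun t : ℝ => hamiltonian Q X P A R B (K + t • E))
      (2 * trace (Eᵀ * ((R + Bᵀ * P * B) * K + Bᵀ * P * A) * X)) 0 := by
  simp only [hamiltonian_add_smul hR hX hP]
  exact hasDerivAt_quadratic_zero _ _ _

end Hamiltonian

theorem hamiltonian_directional_derivative_K2_general
    {n₁ n₂ m₁ m₂ : ℕ}
    (Q P X : Matrix (Fin n₁ ⊕ Fin n₂) (Fin n₁ ⊕ Fin n₂) ℝ)
    (R Υ : Matrix (Fin m₁ ⊕ Fin m₂) (Fin m₁ ⊕ Fin m₂) ℝ)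
    (M : Matrix (Fin m₁ ⊕ Fin m₂) (Fin n₁ ⊕ Fin n₂) ℝ)
    (A : Matrix (Fin n₁ ⊕ Fin n₂) (Fin n₁ ⊕ Fin n₂) ℝ)
    (B : Matrix (Fin n₁ ⊕ Fin n₂) (Fin m₁ ⊕ Fin m₂) ℝ)
    (K₁ : Matrix (Fin m₁) (Fin n₁) ℝ) (K₂ : Matrix (Fin m₂) (Fin n₂) ℝ)
    (X11 : Matrix (Fin n₁) (Fin n₁) ℝ) (X12 : Matrix (Fin n₁) (Fin n₂) ℝ)
    (X22 : Matrix (Fin n₂) (Fin n₂) ℝ)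
    (Υ11 : Matrix (Fin m₁) (Fin m₁) ℝ) (Υ12 : Matrix (Fin m₁) (Fin m₂) ℝ)
    (Υ22 : Matrix (Fin m₂) (Fin m₂) ℝ)
    (M11 : Matrix (Fin m₁) (Fin n₁) ℝ) (M12 : Matrix (Fin m₁) (Fin n₂) ℝ)
    (M21 : Matrix (Fin m₂) (Fin n₁) ℝ) (M22 : Matrix (Fin m₂) (Fin n₂) ℝ)
    (hR : Rᵀ = R) (hP : Pᵀ = P)
    (hX11 : X11ᵀ = X11) (hX22 : X22ᵀ = X22)
    (hX : X = Matrix.fromBlocks X11 X12 X12ᵀ X22)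
    (hΥ : Υ = R + Bᵀ * P * B)
    (hΥblocks : Υ = Matrix.fromBlocks Υ11 Υ12 Υ12ᵀ Υ22)
    (hM : M = Bᵀ * P * A)
    (hMblocks : M = Matrix.fromBlocks M11 M12 M21 M22)
    (D : Matrix (Fin m₂) (Fin n₂) ℝ) :
    HasDerivAt
      (fun t : ℝ =>
        Matrix.trace
          ((Q + (Matrix.fromBlocks K₁ 0 0 (K₂ + t • D))ᵀ * R *
              Matrix.fromBlocks K₁ 0 0 (K₂ + t • D)) * X +
            (A + B * Matrix.fromBlocks K₁ 0 0 (K₂ + t • D)) * X *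
              (A + B * Matrix.fromBlocks K₁ 0 0 (K₂ + t • D))ᵀ * P))
      (2 * Matrix.trace
        (Dᵀ * (Υ22 * K₂ * X22 + M22 * X22 + Υ12ᵀ * K₁ * X12 + M21 * X12)))
      0 := by
  have hXsymm : Xᵀ = X := by rw [hX, fromBlocks_transpose, hX11, hX22, transpose_transpose]
  have hline (t : ℝ) :
      fromBlocks K₁ 0 0 (K₂ + t • D) = fromBlocks K₁ 0 0 K₂ + t • fromBlocks 0 0 0 D := by
    rw [fromBlocks_smul, fromBlocks_add]
    simp
  have hvalue : trace ((fromBlocks 0 0 0 D : Matrix (Fin m₁ ⊕ Fin m₂) (Fin n₁ ⊕ Fin n₂) ℝ)ᵀ *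
      (Υ * fromBlocks K₁ 0 0 K₂ + M) * X) =
      trace (Dᵀ * (Υ22 * K₂ * X22 + M22 * X22 + Υ12ᵀ * K₁ * X12 + M21 * X12)) := by
    rw [hΥblocks, hMblocks, hX, fromBlocks_multiply, fromBlocks_add,
      trace_fromBlocks_zero_transpose_mul_mul]
    simp only [Matrix.mul_zero, add_zero, zero_add, Matrix.add_mul]
    abel_nf
  simp only [hline]
  rw [← hvalue, hΥ, hM]
  exact hasDerivAt_hamiltonian_add_smul hR hXsymm hP _ _

/-- The directional derivative of the Hamiltonian
`K ↦ tr[(Q + KᵀRK)X + (A+BK)X(A+BK)ᵀP]` at `K = diag(K₁,K₂)` in a direction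
`D` placed in the (2,2) block equals
`2 tr(Dᵀ(Υ₂₂K₂X₂₂ + M₂₂X₂₂ + Υ₁₂ᵀK₁X₁₂ + M₂₁X₁₂))`. -/
theorem hamiltonian_directional_derivative_K2
    {n₁ n₂ m₁ m₂ : ℕ}
    (Q P X : Matrix (Fin n₁ ⊕ Fin n₂) (Fin n₁ ⊕ Fin n₂) ℝ)
    (R Υ : Matrix (Fin m₁ ⊕ Fin m₂) (Fin m₁ ⊕ Fin m₂) ℝ)
    (M : Matrix (Fin m₁ ⊕ Fin m₂) (Fin n₁ ⊕ Fin n₂) ℝ)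
    (A : Matrix (Fin n₁ ⊕ Fin n₂) (Fin n₁ ⊕ Fin n₂) ℝ)
    (B : Matrix (Fin n₁ ⊕ Fin n₂) (Fin m₁ ⊕ Fin m₂) ℝ)
    (K₁ : Matrix (Fin m₁) (Fin n₁) ℝ) (K₂ : Matrix (Fin m₂) (Fin n₂) ℝ)
    (X11 : Matrix (Fin n₁) (Fin n₁) ℝ) (X12 : Matrix (Fin n₁) (Fin n₂) ℝ)
    (X22 : Matrix (Fin n₂) (Fin n₂) ℝ)
    (Υ11 : Matrix (Fin m₁) (Fin m₁) ℝ) (Υ12 : Matrix (Fin m₁) (Fin m₂) ℝ)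
    (Υ22 : Matrix (Fin m₂) (Fin m₂) ℝ)
    (M11 : Matrix (Fin m₁) (Fin n₁) ℝ) (M12 : Matrix (Fin m₁) (Fin n₂) ℝ)
    (M21 : Matrix (Fin m₂) (Fin n₁) ℝ) (M22 : Matrix (Fin m₂) (Fin n₂) ℝ)
    (hQ : Qᵀ = Q) (hR : Rᵀ = R) (hP : Pᵀ = P)
    (hX11 : X11ᵀ = X11) (hX22 : X22ᵀ = X22)
    (hX : X = Matrix.fromBlocks X11 X12 X12ᵀ X22)
    (hΥ : Υ = R + Bᵀ * P * B)
    (hΥblocks : Υ = Matrix.fromBlocks Υ11 Υ12 Υ12ᵀ Υ22)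
    (hM : M = Bᵀ * P * A)
    (hMblocks : M = Matrix.fromBlocks M11 M12 M21 M22)
    (D : Matrix (Fin m₂) (Fin n₂) ℝ) :
    HasDerivAt
      (fun t : ℝ =>
        Matrix.trace
          ((Q + (Matrix.fromBlocks K₁ 0 0 (K₂ + t • D))ᵀ * R *
              Matrix.fromBlocks K₁ 0 0 (K₂ + t • D)) * X +
            (A + B * Matrix.fromBlocks K₁ 0 0 (K₂ + t • D)) * X *
              (A + B * Matrix.fromBlocks K₁ 0 0 (K₂ + t • D))ᵀ * P))
      (2 * Matrix.trace
        (Dᵀ * (Υ22 * K₂ * X22 + M22 * X22 + Υ12ᵀ * K₁ * X12 + M21 * X12)))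
      0 :=
  hamiltonian_directional_derivative_K2_general Q P X R Υ M A B K₁ K₂ X11 X12 X22 Υ11 Υ12 Υ22 M11
    M12 M21 M22 hR hP hX11 hX22 hX hΥ hΥblocks hM hMblocks D
end

section
/- (Theorem 1, first-order necessary conditions.) Suppose the sequence of block-diagonal gains (K₁(k), K₂(k))_{k=0}^{N} minimizes the cost J_N = Σ_{k=0}^{N} [x(k)ᵀQx(k) + u(k)ᵀRu(k)] + x(N+1)ᵀP_{N+1}x(N+1) over all sequences of block-diagonal gains, where x(k+1) = (A + B·diag(K₁(k),K₂(k))) x(k) from a fixed initial state x(0). Define X₁₁(k) = x₁(k)x₁(k)ᵀ, X₁₂(k) = x₁(k)x₂(k)ᵀ, X₂₂(k) = x₂(k)x₂(k)ᵀ along the optimal closed-loop trajectory, and let P(k) be generated backward by P(k) = Q + K(k)ᵀRK(k) + (A+BK(k))ᵀP(k+1)(A+BK(k)) with terminal value P(N+1) = P_{N+1}, where K(k) = diag(K₁(k), K₂(k)). Set Υ(k) = R + BᵀP(k+1)B and M(k) = BᵀP(k+1)A, partitioned into blocks Υ_{ij}(k), M_{ij}(k) conformably. Then for every k = 0,…,N: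 Υ₁₁(k)K₁(k)X₁₁(k) + M₁₁(k)X₁₁(k) + Υ₁₂(k)K₂(k)X₁₂(k)ᵀ + M₁₂(k)X₁₂(k)ᵀ = 0 and Υ₂₂(k)K₂(k)X₂₂(k) + M₂₂(k)X₂₂(k) + Υ₁₂(k)ᵀK₁(k)X₁₂(k) + M₂₁(k)X₁₂(k) = 0. -/
/-!
Perturb the gain at a single time `k` in a block-diagonal direction, `K(k) ↦ K(k) + t • Δ`.
The trajectory up to time `k` does not move, and because `P` solves the Riccati recursion of the
unperturbed gains, the cost incurred from time `k + 1` on is the quadratic form of `P (k + 1)` at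
the new state. Hence the total cost changes by
`2 t (Δ x(k)) ⬝ (Υ(k) K(k) + M(k)) x(k) + t² (Δ x(k)) ⬝ Υ(k) (Δ x(k))`, which optimality makes
nonnegative for every `t`, so the linear coefficient vanishes. Letting `Δ` run over the matrix
units of the two diagonal blocks says that the diagonal blocks of the rank-one matrix
`(Υ(k) K(k) + M(k)) x(k) x(k)ᵀ` vanish, and these blocks are the two stated expressions.
-/

open Matrix

lemma eq_zero_of_forall_two_mul_add_sq_nonneg {a b : ℝ}
    (h : ∀ t : ℝ, 0 ≤ 2 * t * a + t ^ 2 * b) : a = 0 := by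
  have hdisc := discrim_le_zero (a := b) (b := 2 * a) (c := 0) fun t => by linarith [h t]
  rw [discrim] at hdisc
  nlinarith [sq_nonneg a]

namespace Matrix

lemma IsSymm.transpose_mul_mul {m n : Type*} [Fintype m] {S : Matrix m m ℝ} (hS : S.IsSymm)
    (X : Matrix m n ℝ) : (Xᵀ * S * X).IsSymm := by
  rw [IsSymm, transpose_mul, transpose_mul, transpose_transpose, hS.eq, Matrix.mul_assoc]

lemma IsSymm.dotProduct_mulVec_comm {n : Type*} [Fintype n] {S : Matrix n n ℝ}
    (hS : S.IsSymm) (u w : n → ℝ) : u ⬝ᵥ S *ᵥ w = w ⬝ᵥ S *ᵥ u := by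
  rw [dotProduct_mulVec, ← mulVec_transpose, hS.eq, dotProduct_comm]

lemma IsSymm.dotProduct_add_smul_mulVec_add_smul {n : Type*} [Fintype n] {S : Matrix n n ℝ}
    (hS : S.IsSymm) (u w : n → ℝ) (t : ℝ) :
    (u + t • w) ⬝ᵥ S *ᵥ (u + t • w) =
      u ⬝ᵥ S *ᵥ u + 2 * t * (w ⬝ᵥ S *ᵥ u) + t ^ 2 * (w ⬝ᵥ S *ᵥ w) := by
  simp only [mulVec_add, mulVec_smul, dotProduct_add, add_dotProduct, dotProduct_smul,
    smul_dotProduct, smul_eq_mul, hS.dotProduct_mulVec_comm u w]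
  ring

lemma vecMulVec_eq_zero_of_forall_mulVec_dotProduct_eq_zero {m n : Type*} [Fintype m]
    [Fintype n] [DecidableEq m] [DecidableEq n] {v : n → ℝ} {g : m → ℝ}
    (h : ∀ Δ : Matrix m n ℝ, Δ *ᵥ v ⬝ᵥ g = 0) : vecMulVec g v = 0 := by
  ext i j
  have hij := h (single i j 1)
  rw [single_mulVec, ← Pi.single, single_dotProduct, one_mul] at hij
  rw [vecMulVec_apply, zero_apply, mul_comm, hij]

section Blocks

variable {m₁ m₂ n₁ n₂ : Type*}

lemma mul_fromBlocks_diag_add [Fintype m₁] [Fintype m₂] (Υ : Matrix (m₁ ⊕ m₂) (m₁ ⊕ m₂) ℝ)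
    (M : Matrix (m₁ ⊕ m₂) (n₁ ⊕ n₂) ℝ) (K₁ : Matrix m₁ n₁ ℝ) (K₂ : Matrix m₂ n₂ ℝ) :
    Υ * fromBlocks K₁ 0 0 K₂ + M =
      fromBlocks (Υ.toBlocks₁₁ * K₁ + M.toBlocks₁₁) (Υ.toBlocks₁₂ * K₂ + M.toBlocks₁₂)
        (Υ.toBlocks₂₁ * K₁ + M.toBlocks₂₁) (Υ.toBlocks₂₂ * K₂ + M.toBlocks₂₂) := by
  conv_lhs => rw [← fromBlocks_toBlocks Υ, ← fromBlocks_toBlocks M]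
  simp only [fromBlocks_multiply, Matrix.mul_zero, add_zero, zero_add, fromBlocks_add]

lemma vecMulVec_mulVec_comp_inl [Fintype n₁] [Fintype n₂] (G : Matrix (m₁ ⊕ m₂) (n₁ ⊕ n₂) ℝ)
    (v : n₁ ⊕ n₂ → ℝ) :
    vecMulVec ((G *ᵥ v) ∘ Sum.inl) (v ∘ Sum.inl) =
      G.toBlocks₁₁ * vecMulVec (v ∘ Sum.inl) (v ∘ Sum.inl) +
        G.toBlocks₁₂ * (vecMulVec (v ∘ Sum.inl) (v ∘ Sum.inr))ᵀ := by
  conv_lhs => rw [← fromBlocks_toBlocks G]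
  rw [fromBlocks_mulVec, Sum.elim_comp_inl, add_vecMulVec, transpose_vecMulVec, mul_vecMulVec,
    mul_vecMulVec]

lemma vecMulVec_mulVec_comp_inr [Fintype n₁] [Fintype n₂] (G : Matrix (m₁ ⊕ m₂) (n₁ ⊕ n₂) ℝ)
    (v : n₁ ⊕ n₂ → ℝ) :
    vecMulVec ((G *ᵥ v) ∘ Sum.inr) (v ∘ Sum.inr) =
      G.toBlocks₂₂ * vecMulVec (v ∘ Sum.inr) (v ∘ Sum.inr) +
        G.toBlocks₂₁ * vecMulVec (v ∘ Sum.inl) (v ∘ Sum.inr) := by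
  conv_lhs => rw [← fromBlocks_toBlocks G]
  rw [fromBlocks_mulVec, Sum.elim_comp_inr, add_vecMulVec, mul_vecMulVec, mul_vecMulVec,
    add_comm]

lemma update_fromBlocks_diag {ι : Type*} [DecidableEq ι]
    (K₁ : ι → Matrix m₁ n₁ ℝ) (K₂ : ι → Matrix m₂ n₂ ℝ) (k : ι) (G₁ : Matrix m₁ n₁ ℝ)
    (G₂ : Matrix m₂ n₂ ℝ) :
    Function.update (fun j => fromBlocks (K₁ j) 0 0 (K₂ j)) k (fromBlocks G₁ 0 0 G₂) =
      fun j => fromBlocks (Function.update K₁ k G₁ j) 0 0 (Function.update K₂ k G₂ j) := by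
  funext j
  rcases eq_or_ne j k with rfl | hj
  · simp only [Function.update_self]
  · simp only [Function.update_of_ne hj]

variable [Fintype m₁] [Fintype m₂] [Fintype n₁] [Fintype n₂]

lemma fromBlocks_diag_mulVec_dotProduct (Δ₁ : Matrix m₁ n₁ ℝ) (Δ₂ : Matrix m₂ n₂ ℝ)
    (v : n₁ ⊕ n₂ → ℝ) (g : m₁ ⊕ m₂ → ℝ) :
    fromBlocks Δ₁ 0 0 Δ₂ *ᵥ v ⬝ᵥ g =
      Δ₁ *ᵥ (v ∘ Sum.inl) ⬝ᵥ g ∘ Sum.inl + Δ₂ *ᵥ (v ∘ Sum.inr) ⬝ᵥ g ∘ Sum.inr := by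
  rw [fromBlocks_mulVec, ← Sum.elim_comp_inl_inr g, sumElim_dotProduct_sumElim]
  simp only [zero_mulVec, add_zero, zero_add, Sum.elim_comp_inl_inr]

lemma vecMulVec_comp_eq_zero_of_forall_fromBlocks_diag [DecidableEq m₁] [DecidableEq m₂]
    [DecidableEq n₁] [DecidableEq n₂] {v : n₁ ⊕ n₂ → ℝ} {g : m₁ ⊕ m₂ → ℝ}
    (h : ∀ (Δ₁ : Matrix m₁ n₁ ℝ) (Δ₂ : Matrix m₂ n₂ ℝ), fromBlocks Δ₁ 0 0 Δ₂ *ᵥ v ⬝ᵥ g = 0) :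
    vecMulVec (g ∘ Sum.inl) (v ∘ Sum.inl) = 0 ∧ vecMulVec (g ∘ Sum.inr) (v ∘ Sum.inr) = 0 :=
  ⟨vecMulVec_eq_zero_of_forall_mulVec_dotProduct_eq_zero fun Δ₁ => by
      simpa only [fromBlocks_diag_mulVec_dotProduct, zero_mulVec, zero_dotProduct, add_zero]
        using h Δ₁ 0,
    vecMulVec_eq_zero_of_forall_mulVec_dotProduct_eq_zero fun Δ₂ => by
      simpa only [fromBlocks_diag_mulVec_dotProduct, zero_mulVec, zero_dotProduct, zero_add]
        using h 0 Δ₂⟩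

end Blocks

end Matrix

namespace LQ

variable {n m : Type*} [Fintype n] [Fintype m]
  (A : Matrix n n ℝ) (B : Matrix n m ℝ) (Q : Matrix n n ℝ) (R : Matrix m m ℝ)

def stageCost (F : Matrix m n ℝ) (z : n → ℝ) : ℝ :=
  z ⬝ᵥ Q *ᵥ z + F *ᵥ z ⬝ᵥ R *ᵥ (F *ᵥ z)

def riccatiStep (F : Matrix m n ℝ) (P : Matrix n n ℝ) : Matrix n n ℝ :=
  Q + Fᵀ * R * F + (A + B * F)ᵀ * P * (A + B * F)

def trajectory (F : ℕ → Matrix m n ℝ) (x₀ : n → ℝ) : ℕ → n → ℝ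
  | 0 => x₀
  | k + 1 => (A + B * F k) *ᵥ trajectory F x₀ k

def cost (PN : Matrix n n ℝ) (N : ℕ) (F : ℕ → Matrix m n ℝ) (x₀ : n → ℝ) : ℝ :=
  ∑ k ∈ Finset.range (N + 1), stageCost Q R (F k) (trajectory A B F x₀ k) +
    trajectory A B F x₀ (N + 1) ⬝ᵥ PN *ᵥ trajectory A B F x₀ (N + 1)

variable {A B Q R}

lemma trajectory_eq_of_forall_succ {F : ℕ → Matrix m n ℝ} {x : ℕ → n → ℝ}
    (hx : ∀ k, x (k + 1) = (A + B * F k) *ᵥ x k) : trajectory A B F (x 0) = x := by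
  funext k
  induction k with
  | zero => rfl
  | succ k ih => rw [trajectory, ih, hx]

lemma trajectory_update_of_le (F : ℕ → Matrix m n ℝ) (G : Matrix m n ℝ) (x₀ : n → ℝ)
    {k j : ℕ} (hj : j ≤ k) :
    trajectory A B (Function.update F k G) x₀ j = trajectory A B F x₀ j := by
  induction j with
  | zero => rfl
  | succ j ih => rw [trajectory, trajectory, ih (by omega), Function.update_of_ne (by omega)]

lemma dotProduct_riccatiStep_mulVec (F : Matrix m n ℝ) (P : Matrix n n ℝ) (v : n → ℝ) :
    v ⬝ᵥ riccatiStep A B Q R F P *ᵥ v =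
      stageCost Q R F v + (A + B * F) *ᵥ v ⬝ᵥ P *ᵥ ((A + B * F) *ᵥ v) := by
  simp only [riccatiStep, stageCost, add_mulVec, dotProduct_add, ← mulVec_mulVec,
    dotProduct_mulVec _ (_ᵀ), vecMul_transpose, add_assoc]

lemma isSymm_riccatiStep (hQ : Q.IsSymm) (hR : R.IsSymm) (F : Matrix m n ℝ)
    {P : Matrix n n ℝ} (hP : P.IsSymm) : (riccatiStep A B Q R F P).IsSymm :=
  (hQ.add (hR.transpose_mul_mul F)).add (hP.transpose_mul_mul _)

lemma stageCost_add_value_add_smul (hR : R.IsSymm) {P : Matrix n n ℝ} (hP : P.IsSymm)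
    (G Δ : Matrix m n ℝ) (v : n → ℝ) (t : ℝ) :
    stageCost Q R (G + t • Δ) v +
        (A + B * (G + t • Δ)) *ᵥ v ⬝ᵥ P *ᵥ ((A + B * (G + t • Δ)) *ᵥ v) =
      stageCost Q R G v + (A + B * G) *ᵥ v ⬝ᵥ P *ᵥ ((A + B * G) *ᵥ v) +
        2 * t * (Δ *ᵥ v ⬝ᵥ ((R + Bᵀ * P * B) * G + Bᵀ * P * A) *ᵥ v) +
        t ^ 2 * (Δ *ᵥ v ⬝ᵥ (R + Bᵀ * P * B) *ᵥ (Δ *ᵥ v)) := by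
  have hgain : (G + t • Δ) *ᵥ v = G *ᵥ v + t • (Δ *ᵥ v) := by
    rw [add_mulVec, smul_mulVec]
  have hnext : (A + B * (G + t • Δ)) *ᵥ v = (A + B * G) *ᵥ v + t • (B *ᵥ (Δ *ᵥ v)) := by
    rw [Matrix.mul_add, Matrix.mul_smul, ← add_assoc, add_mulVec (A + B * G), smul_mulVec,
      mulVec_mulVec]
  have hB (w : n → ℝ) : B *ᵥ (Δ *ᵥ v) ⬝ᵥ P *ᵥ w = Δ *ᵥ v ⬝ᵥ (Bᵀ * P) *ᵥ w := by
    rw [← vecMul_transpose, ← dotProduct_mulVec, mulVec_mulVec]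
  simp only [stageCost, hgain, hnext, hR.dotProduct_add_smul_mulVec_add_smul,
    hP.dotProduct_add_smul_mulVec_add_smul, hB, ← mulVec_mulVec]
  simp only [add_mulVec, mulVec_add, Matrix.add_mul, mulVec_mulVec, dotProduct_add,
    Matrix.mul_assoc]
  ring

variable {PN : Matrix n n ℝ} {N : ℕ} {F : ℕ → Matrix m n ℝ} {P : ℕ → Matrix n n ℝ}

lemma isSymm_of_riccati (hQ : Q.IsSymm) (hR : R.IsSymm) (hPN : PN.IsSymm)
    (hPterm : P (N + 1) = PN) (hPrec : ∀ k ≤ N, P k = riccatiStep A B Q R (F k) (P (k + 1)))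
    {k : ℕ} (hk : k ≤ N + 1) : (P k).IsSymm := by
  induction hk using Nat.decreasingInduction with
  | self => exact hPterm ▸ hPN
  | of_succ k hk ih => exact hPrec k (by omega) ▸ isSymm_riccatiStep hQ hR (F k) ih

lemma cost_eq_sum_add_value (x₀ : n → ℝ) {k : ℕ} (hPterm : P (N + 1) = PN)
    (hPrec : ∀ j, k ≤ j → j ≤ N → P j = riccatiStep A B Q R (F j) (P (j + 1)))
    (hk : k ≤ N + 1) :
    cost A B Q R PN N F x₀ =
      ∑ j ∈ Finset.range k, stageCost Q R (F j) (trajectory A B F x₀ j) +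
        trajectory A B F x₀ k ⬝ᵥ P k *ᵥ trajectory A B F x₀ k := by
  induction hk using Nat.decreasingInduction with
  | self => rw [cost, hPterm]
  | of_succ k hk ih =>
    rw [ih fun j hj => hPrec j (by omega), Finset.sum_range_succ, add_assoc,
      hPrec k le_rfl (by omega), dotProduct_riccatiStep_mulVec]
    rfl

lemma mulVec_dotProduct_eq_zero_of_cost_le_update (hR : R.IsSymm) {k : ℕ} (hk : k ≤ N)
    (hP : (P (k + 1)).IsSymm) (hPterm : P (N + 1) = PN)
    (hPrec : ∀ j, k + 1 ≤ j → j ≤ N → P j = riccatiStep A B Q R (F j) (P (j + 1)))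
    (x₀ : n → ℝ) (Δ : Matrix m n ℝ)
    (hmin : ∀ t : ℝ, cost A B Q R PN N F x₀ ≤
      cost A B Q R PN N (Function.update F k (F k + t • Δ)) x₀) :
    Δ *ᵥ trajectory A B F x₀ k ⬝ᵥ
      ((R + Bᵀ * P (k + 1) * B) * F k + Bᵀ * P (k + 1) * A) *ᵥ trajectory A B F x₀ k = 0 := by
  refine eq_zero_of_forall_two_mul_add_sq_nonneg (b := Δ *ᵥ trajectory A B F x₀ k ⬝ᵥ
    (R + Bᵀ * P (k + 1) * B) *ᵥ (Δ *ᵥ trajectory A B F x₀ k)) fun t => ?_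
  set F' := Function.update F k (F k + t • Δ)
  have hF'k : F' k = F k + t • Δ := Function.update_self ..
  have hF'j : ∀ j ≠ k, F' j = F j := fun j hj => Function.update_of_ne hj ..
  have hPrec' : ∀ j, k + 1 ≤ j → j ≤ N → P j = riccatiStep A B Q R (F' j) (P (j + 1)) :=
    fun j hj hjN => by rw [hF'j j (by omega)]; exact hPrec j hj hjN
  have hprefix : ∑ j ∈ Finset.range k, stageCost Q R (F' j) (trajectory A B F' x₀ j) =
      ∑ j ∈ Finset.range k, stageCost Q R (F j) (trajectory A B F x₀ j) :=
    Finset.sum_congr rfl fun j hj => by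
      rw [Finset.mem_range] at hj
      rw [hF'j j hj.ne, trajectory_update_of_le F _ x₀ hj.le]
  have hle := hmin t
  rw [cost_eq_sum_add_value x₀ hPterm hPrec (by omega),
    cost_eq_sum_add_value x₀ hPterm hPrec' (by omega), Finset.sum_range_succ,
    Finset.sum_range_succ, hprefix] at hle
  simp only [trajectory] at hle
  rw [trajectory_update_of_le F _ x₀ le_rfl, hF'k] at hle
  linarith [stageCost_add_value_add_smul (A := A) (B := B) (Q := Q) hR hP (F k) Δ
    (trajectory A B F x₀ k) t]
end LQ

/-- Theorem 1: first-order necessary conditions for an optimal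
sequence of block-diagonal gains `K(k) = diag(K₁(k), K₂(k))`. -/
theorem decentralized_LQ_necessary_conditions
    {n₁ n₂ m₁ m₂ : ℕ}
    (A : Matrix (Fin n₁ ⊕ Fin n₂) (Fin n₁ ⊕ Fin n₂) ℝ)
    (B : Matrix (Fin n₁ ⊕ Fin n₂) (Fin m₁ ⊕ Fin m₂) ℝ)
    (Q PN : Matrix (Fin n₁ ⊕ Fin n₂) (Fin n₁ ⊕ Fin n₂) ℝ)
    (R : Matrix (Fin m₁ ⊕ Fin m₂) (Fin m₁ ⊕ Fin m₂) ℝ)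
    (hQpsd : Q.PosSemidef) (hRpsd : R.PosSemidef) (hPNpsd : PN.PosSemidef)
    (N : ℕ)
    -- the optimal gains and the corresponding closed-loop trajectory
    (K₁ : ℕ → Matrix (Fin m₁) (Fin n₁) ℝ)
    (K₂ : ℕ → Matrix (Fin m₂) (Fin n₂) ℝ)
    (x : ℕ → (Fin n₁ ⊕ Fin n₂) → ℝ)
    (hx : ∀ k, x (k + 1) =
      (A + B * Matrix.fromBlocks (K₁ k) 0 0 (K₂ k)).mulVec (x k))
    -- optimality of (K₁, K₂) among all block-diagonal gain sequences
    (hopt : ∀ (K₁' : ℕ → Matrix (Fin m₁) (Fin n₁) ℝ)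
        (K₂' : ℕ → Matrix (Fin m₂) (Fin n₂) ℝ)
        (x' : ℕ → (Fin n₁ ⊕ Fin n₂) → ℝ),
      x' 0 = x 0 →
      (∀ k, x' (k + 1) =
        (A + B * Matrix.fromBlocks (K₁' k) 0 0 (K₂' k)).mulVec (x' k)) →
      (∑ k ∈ Finset.range (N + 1),
          (x k ⬝ᵥ Q.mulVec (x k) +
            (Matrix.fromBlocks (K₁ k) 0 0 (K₂ k)).mulVec (x k) ⬝ᵥ
              R.mulVec ((Matrix.fromBlocks (K₁ k) 0 0 (K₂ k)).mulVec (x k)))) +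
          x (N + 1) ⬝ᵥ PN.mulVec (x (N + 1)) ≤
        (∑ k ∈ Finset.range (N + 1),
          (x' k ⬝ᵥ Q.mulVec (x' k) +
            (Matrix.fromBlocks (K₁' k) 0 0 (K₂' k)).mulVec (x' k) ⬝ᵥ
              R.mulVec ((Matrix.fromBlocks (K₁' k) 0 0 (K₂' k)).mulVec (x' k)))) +
          x' (N + 1) ⬝ᵥ PN.mulVec (x' (N + 1)))
    -- the outer-product matrices along the optimal trajectory
    (X11 : ℕ → Matrix (Fin n₁) (Fin n₁) ℝ)
    (X12 : ℕ → Matrix (Fin n₁) (Fin n₂) ℝ)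
    (X22 : ℕ → Matrix (Fin n₂) (Fin n₂) ℝ)
    (hX11 : ∀ k, X11 k =
      vecMulVec (fun i => x k (Sum.inl i)) (fun i => x k (Sum.inl i)))
    (hX12 : ∀ k, X12 k =
      vecMulVec (fun i => x k (Sum.inl i)) (fun i => x k (Sum.inr i)))
    (hX22 : ∀ k, X22 k =
      vecMulVec (fun i => x k (Sum.inr i)) (fun i => x k (Sum.inr i)))
    -- the backward Riccati-type recursion
    (P : ℕ → Matrix (Fin n₁ ⊕ Fin n₂) (Fin n₁ ⊕ Fin n₂) ℝ)
    (hPterm : P (N + 1) = PN)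
    (hPrec : ∀ k ≤ N, P k =
      Q + (Matrix.fromBlocks (K₁ k) 0 0 (K₂ k))ᵀ * R *
            Matrix.fromBlocks (K₁ k) 0 0 (K₂ k) +
        (A + B * Matrix.fromBlocks (K₁ k) 0 0 (K₂ k))ᵀ * P (k + 1) *
          (A + B * Matrix.fromBlocks (K₁ k) 0 0 (K₂ k)))
    -- Υ(k) = R + BᵀP(k+1)B and M(k) = BᵀP(k+1)A
    (Υ : ℕ → Matrix (Fin m₁ ⊕ Fin m₂) (Fin m₁ ⊕ Fin m₂) ℝ)
    (M : ℕ → Matrix (Fin m₁ ⊕ Fin m₂) (Fin n₁ ⊕ Fin n₂) ℝ)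
    (hΥ : ∀ k, Υ k = R + Bᵀ * P (k + 1) * B)
    (hM : ∀ k, M k = Bᵀ * P (k + 1) * A) :
    ∀ k ≤ N,
      (Υ k).toBlocks₁₁ * K₁ k * X11 k + (M k).toBlocks₁₁ * X11 k +
          (Υ k).toBlocks₁₂ * K₂ k * (X12 k)ᵀ + (M k).toBlocks₁₂ * (X12 k)ᵀ = 0 ∧
      (Υ k).toBlocks₂₂ * K₂ k * X22 k + (M k).toBlocks₂₂ * X22 k +
          ((Υ k).toBlocks₁₂)ᵀ * K₁ k * X12 k + (M k).toBlocks₂₁ * X12 k = 0 := by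
  intro k hk
  set F := fun j => fromBlocks (K₁ j) 0 0 (K₂ j)
  have hxF : LQ.trajectory A B F (x 0) = x := LQ.trajectory_eq_of_forall_succ hx
  have hR : R.IsSymm := isHermitian_iff_isSymm.mp hRpsd.isHermitian
  have hP : (P (k + 1)).IsSymm := LQ.isSymm_of_riccati
    (isHermitian_iff_isSymm.mp hQpsd.isHermitian) hR
    (isHermitian_iff_isSymm.mp hPNpsd.isHermitian) hPterm hPrec (by omega)
  have hstationary : ∀ (Δ₁ : Matrix (Fin m₁) (Fin n₁) ℝ) (Δ₂ : Matrix (Fin m₂) (Fin n₂) ℝ),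
      fromBlocks Δ₁ 0 0 Δ₂ *ᵥ x k ⬝ᵥ (Υ k * F k + M k) *ᵥ x k = 0 := by
    intro Δ₁ Δ₂
    rw [hΥ, hM, ← hxF]
    refine LQ.mulVec_dotProduct_eq_zero_of_cost_le_update hR hk hP hPterm
      (fun j _ => hPrec j) _ _ fun t => ?_
    simp only [fromBlocks_smul, fromBlocks_add, smul_zero, add_zero, update_fromBlocks_diag]
    have hle := hopt (Function.update K₁ k (K₁ k + t • Δ₁))
      (Function.update K₂ k (K₂ k + t • Δ₂)) (LQ.trajectory A B _ (x 0)) rfl fun _ => rfl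
    rw [← hxF] at hle
    exact hle
  obtain ⟨h₁, h₂⟩ := vecMulVec_comp_eq_zero_of_forall_fromBlocks_diag hstationary
  rw [vecMulVec_mulVec_comp_inl, mul_fromBlocks_diag_add, toBlocks_fromBlocks₁₁,
    toBlocks_fromBlocks₁₂, Matrix.add_mul, Matrix.add_mul, ← add_assoc] at h₁
  rw [vecMulVec_mulVec_comp_inr, mul_fromBlocks_diag_add, toBlocks_fromBlocks₂₂,
    toBlocks_fromBlocks₂₁, Matrix.add_mul, Matrix.add_mul, ← add_assoc] at h₂
  have hΥsymm : (Υ k).IsSymm := hΥ k ▸ hR.add (hP.transpose_mul_mul B)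
  have hΥ₁₂ : ((Υ k).toBlocks₁₂)ᵀ = (Υ k).toBlocks₂₁ := (congr_arg toBlocks₂₁ hΥsymm :)
  rw [hX11, hX12, hX22, hΥ₁₂]
  exact ⟨h₁, h₂⟩
end

section
/- (Output-feedback first-order necessary conditions.) Suppose the block-diagonal output-feedback gain sequence (K^y₁(k), K^y₂(k))_{k=0}^{N} minimizes J_N = Σ_{k=0}^{N}[x(k)ᵀQx(k) + u(k)ᵀRu(k)] + x(N+1)ᵀP_{N+1}x(N+1) over all such sequences, where x(k+1) = (A + B·diag(K^y₁(k),K^y₂(k))·H) x(k) from a fixed initial state x(0), with H = diag(H₁,H₂) and H partitioned so that y₁ = H₁x, y₂ = H₂x (here H₁ acts on x₁ and H₂ on x₂ blocks conformably). Define X₁₁(k) = x₁(k)x₁(k)ᵀ, X₁₂(k) = x₁(k)x₂(k)ᵀ, X₂₂(k) = x₂(k)x₂(k)ᵀ along the optimal trajectory; let P^y(k) be given backward by P^y(k) = Q + HᵀK^y(k)ᵀRK^y(k)H + (A+BK^y(k)H)ᵀP^y(k+1)(A+BK^y(k)H) with P^y(N+1) = P_{N+1}; and set Υ^y(k) = R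 + BᵀP^y(k+1)B, M^y(k) = BᵀP^y(k+1)A with conformable blocks Υ^y_{ij}(k), M^y_{ij}(k). Then for every k: Υ^y₁₁(k)K^y₁(k)H₁X₁₁(k)H₁ᵀ + M^y₁₁(k)X₁₁(k)H₁ᵀ + Υ^y₁₂(k)K^y₂(k)H₂X₁₂(k)ᵀH₁ᵀ + M^y₁₂(k)X₁₂(k)ᵀH₁ᵀ = 0 and Υ^y₁₂(k)ᵀK^y₁(k)H₁X₁₂(k)H₂ᵀ + M^y₂₁(k)X₁₂(k)H₂ᵀ + Υ^y₂₂(k)K^y₂(k)H₂X₂₂(k)H₂ᵀ + M^y₂₂(k)X₂₂(k)H₂ᵀ = 0. -/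
/-!
Perturb the gains at a single time `k` in a block-diagonal direction `L = diag(L₁, L₂)`:
`K(k) ↦ K(k) + ε L`. The trajectory is unchanged up to time `k`, and from time `k + 1` on the
closed loop is the original one, whose cost-to-go is `x(k+1)ᵀ P^y(k+1) x(k+1)` by the backward
recursion. The cost is therefore a quadratic polynomial in `ε`; minimality at `ε = 0` kills its
linear coefficient, which is `(L H x(k))ᵀ (Υ^y(k) K(k) H + M^y(k)) x(k)`. Taking `L₁`, `L₂` to be
matrix units shows that the diagonal blocks of the outer product
`(Υ^y K H + M^y) x xᵀ Hᵀ` vanish, and these blocks are the two expressions of the theorem.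
-/

open Matrix Finset

section MatrixAlgebra

variable {α : Type*} [CommRing α] {ι κ μ ν : Type*}

theorem dotProduct_mulVec_comm_of_isSymm [Fintype ι] {W : Matrix ι ι α} (hW : W.IsSymm)
    (a b : ι → α) : a ⬝ᵥ W *ᵥ b = b ⬝ᵥ W *ᵥ a := by
  rw [dotProduct_mulVec, ← mulVec_transpose, hW.eq, dotProduct_comm]

theorem dotProduct_transpose_mul_mul_mulVec [Fintype ι] [Fintype κ] (F : Matrix κ ι α)
    (W : Matrix κ κ α) (z : ι → α) : z ⬝ᵥ (Fᵀ * W * F) *ᵥ z = (F *ᵥ z) ⬝ᵥ W *ᵥ (F *ᵥ z) := by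
  rw [← mulVec_mulVec, ← mulVec_mulVec, dotProduct_mulVec, vecMul_transpose]

theorem dotProduct_mulVec_add_smul [Fintype ι] {W : Matrix ι ι α} (hW : W.IsSymm)
    (a b : ι → α) (ε : α) :
    (a + ε • b) ⬝ᵥ W *ᵥ (a + ε • b) =
      a ⬝ᵥ W *ᵥ a + 2 * (b ⬝ᵥ W *ᵥ a) * ε + (b ⬝ᵥ W *ᵥ b) * (ε * ε) := by
  simp only [mulVec_add, mulVec_smul, dotProduct_add, add_dotProduct, smul_dotProduct,
    dotProduct_smul, smul_eq_mul, dotProduct_mulVec_comm_of_isSymm hW a b]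
  ring

theorem Matrix.IsSymm.transpose_mul_mul_s14 [Fintype κ] {W : Matrix κ κ α} (hW : W.IsSymm)
    (F : Matrix κ ι α) : (Fᵀ * W * F).IsSymm := by
  simp only [IsSymm, transpose_mul, transpose_transpose, hW.eq, Matrix.mul_assoc]

theorem vecMulVec_mulVec_mulVec [Fintype ι] [Fintype κ] (S : Matrix μ ι α) (F : Matrix ν κ α)
    (a : ι → α) (b : κ → α) : vecMulVec (S *ᵥ a) (F *ᵥ b) = S * vecMulVec a b * Fᵀ := by
  rw [mul_vecMulVec, vecMulVec_mul, vecMul_transpose]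

theorem vecMulVec_eq_zero_of_forall_mulVec_dotProduct [Fintype μ] [Fintype κ]
    {s : μ → α} {w : κ → α} (h : ∀ L : Matrix μ κ α, (L *ᵥ w) ⬝ᵥ s = 0) :
    vecMulVec s w = 0 := by
  classical
  ext i j
  have hij : Pi.single i (w j) ⬝ᵥ s = 0 := by
    rw [← h (single i j 1), single_mulVec, one_mul]
    rfl
  rwa [single_dotProduct, mul_comm] at hij

end MatrixAlgebra

theorem eq_zero_of_forall_quadratic_nonneg {𝕜 : Type*} [Field 𝕜] [LinearOrder 𝕜]
    [IsStrictOrderedRing 𝕜] {a b : 𝕜} (h : ∀ ε : 𝕜, 0 ≤ a * (ε * ε) + 2 * b * ε) : b = 0 := by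
  have hdisc : discrim a (2 * b) 0 ≤ 0 := discrim_le_zero fun ε => by simpa using h ε
  rw [discrim] at hdisc
  nlinarith [sq_nonneg b]

section Blocks

variable {α : Type*} {m₁ m₂ n₁ n₂ p₁ p₂ : Type*}

theorem toBlocks₁₂_transpose_of_isSymm {Y : Matrix (m₁ ⊕ m₂) (m₁ ⊕ m₂) α} (hY : Y.IsSymm) :
    Y.toBlocks₁₂ᵀ = Y.toBlocks₂₁ := by
  rw [← fromBlocks_toBlocks Y] at hY
  exact (isSymm_fromBlocks_iff.mp hY).2.1

variable [CommRing α]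

theorem vecMulVec_self_eq_fromBlocks (a : m₁ ⊕ m₂ → α) :
    vecMulVec a a =
      fromBlocks (vecMulVec (a ∘ Sum.inl) (a ∘ Sum.inl)) (vecMulVec (a ∘ Sum.inl) (a ∘ Sum.inr))
        (vecMulVec (a ∘ Sum.inl) (a ∘ Sum.inr))ᵀ (vecMulVec (a ∘ Sum.inr) (a ∘ Sum.inr)) := by
  rw [transpose_vecMulVec]
  ext (i | i) (j | j) <;> rfl

variable [Fintype m₁] [Fintype m₂] [Fintype n₁] [Fintype n₂] [Fintype p₁] [Fintype p₂]

theorem fromBlocks_zero_mulVec_dotProduct (L₁ : Matrix m₁ p₁ α) (L₂ : Matrix m₂ p₂ α)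
    (w : p₁ ⊕ p₂ → α) (s : m₁ ⊕ m₂ → α) :
    (fromBlocks L₁ 0 0 L₂ *ᵥ w) ⬝ᵥ s =
      (L₁ *ᵥ (w ∘ Sum.inl)) ⬝ᵥ (s ∘ Sum.inl) + (L₂ *ᵥ (w ∘ Sum.inr)) ⬝ᵥ (s ∘ Sum.inr) := by
  simp [fromBlocks_mulVec, dotProduct, Fintype.sum_sum_type]

theorem vecMulVec_diag_blocks_eq_zero {s : m₁ ⊕ m₂ → α} {w : p₁ ⊕ p₂ → α}
    (h : ∀ (L₁ : Matrix m₁ p₁ α) (L₂ : Matrix m₂ p₂ α), (fromBlocks L₁ 0 0 L₂ *ᵥ w) ⬝ᵥ s = 0) :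
    (vecMulVec s w).toBlocks₁₁ = 0 ∧ (vecMulVec s w).toBlocks₂₂ = 0 :=
  ⟨vecMulVec_eq_zero_of_forall_mulVec_dotProduct fun L =>
      (by simpa only [fromBlocks_zero_mulVec_dotProduct, zero_mulVec, zero_dotProduct, add_zero]
        using h L 0 : (L *ᵥ (w ∘ Sum.inl)) ⬝ᵥ (s ∘ Sum.inl) = 0),
    vecMulVec_eq_zero_of_forall_mulVec_dotProduct fun L =>
      (by simpa only [fromBlocks_zero_mulVec_dotProduct, zero_mulVec, zero_dotProduct, zero_add]
        using h 0 L : (L *ᵥ (w ∘ Sum.inr)) ⬝ᵥ (s ∘ Sum.inr) = 0)⟩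

variable (Y : Matrix (m₁ ⊕ m₂) (m₁ ⊕ m₂) α) (M : Matrix (m₁ ⊕ m₂) (n₁ ⊕ n₂) α)
    (K₁ : Matrix m₁ p₁ α) (K₂ : Matrix m₂ p₂ α) (H₁ : Matrix p₁ n₁ α) (H₂ : Matrix p₂ n₂ α)
    (X₁₁ : Matrix n₁ n₁ α) (X₁₂ : Matrix n₁ n₂ α) (X₂₂ : Matrix n₂ n₂ α)

theorem toBlocks₁₁_blockDiagonal_gain_gradient :
    ((Y * (fromBlocks K₁ 0 0 K₂ * fromBlocks H₁ 0 0 H₂) + M) * fromBlocks X₁₁ X₁₂ X₁₂ᵀ X₂₂ *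
        (fromBlocks H₁ 0 0 H₂)ᵀ).toBlocks₁₁ =
      Y.toBlocks₁₁ * K₁ * H₁ * X₁₁ * H₁ᵀ + M.toBlocks₁₁ * X₁₁ * H₁ᵀ +
        Y.toBlocks₁₂ * K₂ * H₂ * X₁₂ᵀ * H₁ᵀ + M.toBlocks₁₂ * X₁₂ᵀ * H₁ᵀ := by
  conv_lhs => rw [← fromBlocks_toBlocks Y, ← fromBlocks_toBlocks M]
  simp only [fromBlocks_multiply, fromBlocks_add, fromBlocks_transpose, toBlocks_fromBlocks₁₁,
    Matrix.mul_zero, Matrix.zero_mul, add_zero, zero_add, transpose_zero, Matrix.add_mul,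
    Matrix.mul_assoc]
  abel

theorem toBlocks₂₂_blockDiagonal_gain_gradient :
    ((Y * (fromBlocks K₁ 0 0 K₂ * fromBlocks H₁ 0 0 H₂) + M) * fromBlocks X₁₁ X₁₂ X₁₂ᵀ X₂₂ *
        (fromBlocks H₁ 0 0 H₂)ᵀ).toBlocks₂₂ =
      Y.toBlocks₂₁ * K₁ * H₁ * X₁₂ * H₂ᵀ + M.toBlocks₂₁ * X₁₂ * H₂ᵀ +
        Y.toBlocks₂₂ * K₂ * H₂ * X₂₂ * H₂ᵀ + M.toBlocks₂₂ * X₂₂ * H₂ᵀ := by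
  conv_lhs => rw [← fromBlocks_toBlocks Y, ← fromBlocks_toBlocks M]
  simp only [fromBlocks_multiply, fromBlocks_add, fromBlocks_transpose, toBlocks_fromBlocks₂₂,
    Matrix.mul_zero, Matrix.zero_mul, add_zero, zero_add, transpose_zero, Matrix.add_mul,
    Matrix.mul_assoc]
  abel

end Blocks

theorem fromBlocks_update_add_smul_mul {α : Type*} [CommRing α] {m₁ m₂ p₁ p₂ n T : Type*}
    [Fintype p₁] [Fintype p₂] [DecidableEq T] (K₁ : T → Matrix m₁ p₁ α)
    (K₂ : T → Matrix m₂ p₂ α) (L₁ : Matrix m₁ p₁ α) (L₂ : Matrix m₂ p₂ α)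
    (F : Matrix (p₁ ⊕ p₂) n α) (k : T) (ε : α) (i : T) :
    fromBlocks (Function.update K₁ k (K₁ k + ε • L₁) i) 0 0
        (Function.update K₂ k (K₂ k + ε • L₂) i) * F =
      Function.update (fun j => fromBlocks (K₁ j) 0 0 (K₂ j) * F) k
        (fromBlocks (K₁ k) 0 0 (K₂ k) * F + ε • (fromBlocks L₁ 0 0 L₂ * F)) i := by
  rcases eq_or_ne i k with rfl | hi
  · rw [← Matrix.smul_mul, ← Matrix.add_mul, fromBlocks_smul, fromBlocks_add]
    simp
  · simp [hi]

section LinearQuadratic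

variable {α : Type*} [CommRing α] {ι κ : Type*} [Fintype ι] [Fintype κ]
  (A : Matrix ι ι α) (B : Matrix ι κ α) (Q : Matrix ι ι α) (R : Matrix κ κ α)

def IsTrajectory (F : ℕ → Matrix ι ι α) (z : ℕ → ι → α) : Prop :=
  ∀ i, z (i + 1) = F i *ᵥ z i

def stageCost (G : Matrix κ ι α) (z : ι → α) : α :=
  z ⬝ᵥ Q *ᵥ z + (G *ᵥ z) ⬝ᵥ R *ᵥ (G *ᵥ z)

def lqCost (PN : Matrix ι ι α) (N : ℕ) (G : ℕ → Matrix κ ι α) (x : ℕ → ι → α) : α :=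
  ∑ i ∈ range (N + 1), stageCost Q R (G i) (x i) + x (N + 1) ⬝ᵥ PN *ᵥ x (N + 1)

def lyapunovStep (G : Matrix κ ι α) (P : Matrix ι ι α) : Matrix ι ι α :=
  Q + Gᵀ * R * G + (A + B * G)ᵀ * P * (A + B * G)

variable {A B Q R}

theorem exists_isTrajectory (F : ℕ → Matrix ι ι α) (z₀ : ι → α) :
    ∃ z, z 0 = z₀ ∧ IsTrajectory F z :=
  ⟨fun i => Nat.rec z₀ (fun j v => F j *ᵥ v) i, rfl, fun _ => rfl⟩

theorem IsTrajectory.eq_of_forall_lt {F F' : ℕ → Matrix ι ι α} {z z' : ℕ → ι → α}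
    (hz : IsTrajectory F z) (hz' : IsTrajectory F' z') (h₀ : z' 0 = z 0) {k : ℕ}
    (hF : ∀ i < k, F' i = F i) : ∀ i ≤ k, z' i = z i := by
  intro i hi
  induction i with
  | zero => exact h₀
  | succ i ih => rw [hz i, hz' i, hF i (by omega), ih (by omega)]

theorem dotProduct_lyapunovStep_mulVec (G : Matrix κ ι α) (P : Matrix ι ι α) (z : ι → α) :
    z ⬝ᵥ lyapunovStep A B Q R G P *ᵥ z =
      stageCost Q R G z + ((A + B * G) *ᵥ z) ⬝ᵥ P *ᵥ ((A + B * G) *ᵥ z) := by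
  rw [lyapunovStep, add_mulVec, add_mulVec, dotProduct_add, dotProduct_add,
    dotProduct_transpose_mul_mul_mulVec, dotProduct_transpose_mul_mul_mulVec, stageCost]

theorem Matrix.IsSymm.lyapunovStep (hQ : Q.IsSymm) (hR : R.IsSymm) {P : Matrix ι ι α}
    (hP : P.IsSymm) (G : Matrix κ ι α) : (lyapunovStep A B Q R G P).IsSymm :=
  (hQ.add (hR.transpose_mul_mul_s14 G)).add (hP.transpose_mul_mul_s14 _)

variable {PN : Matrix ι ι α} {N : ℕ} {G : ℕ → Matrix κ ι α} {P : ℕ → Matrix ι ι α}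

theorem isSymm_of_lyapunov (hQ : Q.IsSymm) (hR : R.IsSymm) (hPN : PN.IsSymm)
    (hPterm : P (N + 1) = PN) (hP : ∀ i ≤ N, P i = lyapunovStep A B Q R (G i) (P (i + 1))) :
    ∀ i ≤ N + 1, (P i).IsSymm := by
  intro i hi
  induction hi using Nat.decreasingInduction with
  | self => rwa [hPterm]
  | of_succ i hi ih => rw [hP i (by omega)]; exact hQ.lyapunovStep hR ih _

theorem lqCost_eq_sum_range_add {x : ℕ → ι → α} {t : ℕ} (ht : t ≤ N + 1)
    (hPterm : P (N + 1) = PN)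
    (hP : ∀ i, t ≤ i → i ≤ N → P i = lyapunovStep A B Q R (G i) (P (i + 1)))
    (hx : ∀ i, t ≤ i → x (i + 1) = (A + B * G i) *ᵥ x i) :
    lqCost Q R PN N G x = ∑ i ∈ range t, stageCost Q R (G i) (x i) + x t ⬝ᵥ P t *ᵥ x t := by
  set V : ℕ → α := fun i => x i ⬝ᵥ P i *ᵥ x i
  have htelescope : ∀ i ∈ Ico t (N + 1), stageCost Q R (G i) (x i) = -V (i + 1) - -V i := by
    intro i hi
    obtain ⟨hti, hiN⟩ := mem_Ico.mp hi
    simp only [V, hP i hti (by omega), dotProduct_lyapunovStep_mulVec, ← hx i hti]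
    ring
  rw [lqCost, ← sum_range_add_sum_Ico _ ht, sum_congr rfl htelescope,
    sum_Ico_sub (fun i => -V i) ht]
  simp only [V, hPterm]
  ring

theorem lqCost_eq_of_forall_ne {x x' : ℕ → ι → α} {G' : ℕ → Matrix κ ι α} {k : ℕ} (hk : k ≤ N)
    (hPterm : P (N + 1) = PN) (hP : ∀ i ≤ N, P i = lyapunovStep A B Q R (G i) (P (i + 1)))
    (hx : IsTrajectory (fun i => A + B * G i) x) (hx' : IsTrajectory (fun i => A + B * G' i) x')
    (h₀ : x' 0 = x 0) (hG' : ∀ i ≠ k, G' i = G i) :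
    lqCost Q R PN N G' x' = ∑ i ∈ range k, stageCost Q R (G i) (x i) +
      stageCost Q R (G' k) (x k) + x' (k + 1) ⬝ᵥ P (k + 1) *ᵥ x' (k + 1) := by
  have hagree := hx.eq_of_forall_lt hx' h₀ (k := k) fun i hi => by simp only [hG' i hi.ne]
  rw [lqCost_eq_sum_range_add (t := k + 1) (by omega) hPterm
      (fun i hi hiN => by rw [hG' i (by omega)]; exact hP i hiN) (fun i _ => hx' i),
    sum_range_succ, hagree k le_rfl]
  congr 2
  exact sum_congr rfl fun i hi => by
    rw [hG' i (mem_range.mp hi).ne, hagree i (mem_range.mp hi).le]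

end LinearQuadratic

section FirstOrder

variable {𝕜 : Type*} [Field 𝕜] [LinearOrder 𝕜] [IsStrictOrderedRing 𝕜] {ι κ : Type*}
  [Fintype ι] [Fintype κ] {A : Matrix ι ι 𝕜} {B : Matrix ι κ 𝕜} {Q PN : Matrix ι ι 𝕜}
  {R : Matrix κ κ 𝕜} {N k : ℕ} {G : ℕ → Matrix κ ι 𝕜} {P : ℕ → Matrix ι ι 𝕜} {x : ℕ → ι → 𝕜}

theorem dotProduct_gain_gradient_eq_zero (hR : R.IsSymm) (hPk : (P (k + 1)).IsSymm)
    (hk : k ≤ N) (hPterm : P (N + 1) = PN)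
    (hP : ∀ i ≤ N, P i = lyapunovStep A B Q R (G i) (P (i + 1)))
    (hx : IsTrajectory (fun i => A + B * G i) x) (D : Matrix κ ι 𝕜)
    (hopt : ∀ (ε : 𝕜) (x' : ℕ → ι → 𝕜), x' 0 = x 0 →
      IsTrajectory (fun i => A + B * Function.update G k (G k + ε • D) i) x' →
      lqCost Q R PN N G x ≤ lqCost Q R PN N (Function.update G k (G k + ε • D)) x') :
    (D *ᵥ x k) ⬝ᵥ ((R + Bᵀ * P (k + 1) * B) * G k + Bᵀ * P (k + 1) * A) *ᵥ x k = 0 := by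
  set u := G k *ᵥ x k
  set v := D *ᵥ x k
  have hgrad : v ⬝ᵥ ((R + Bᵀ * P (k + 1) * B) * G k + Bᵀ * P (k + 1) * A) *ᵥ x k =
      v ⬝ᵥ R *ᵥ u + (B *ᵥ v) ⬝ᵥ P (k + 1) *ᵥ x (k + 1) := by
    rw [hx k]
    simp only [Matrix.add_mul, add_mulVec, mulVec_add, dotProduct_add, ← mulVec_mulVec,
      Matrix.mul_assoc]
    rw [dotProduct_mulVec v Bᵀ, dotProduct_mulVec v Bᵀ, vecMul_transpose]
    ring
  rw [hgrad]
  refine eq_zero_of_forall_quadratic_nonneg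
    (a := v ⬝ᵥ R *ᵥ v + (B *ᵥ v) ⬝ᵥ P (k + 1) *ᵥ (B *ᵥ v)) fun ε => ?_
  set G' := Function.update G k (G k + ε • D)
  have hG' : ∀ i ≠ k, G' i = G i := fun i hi => Function.update_of_ne hi _ _
  obtain ⟨x', hx'₀, hx'⟩ := exists_isTrajectory (fun i => A + B * G' i) (x 0)
  have hxk : x' k = x k :=
    hx.eq_of_forall_lt hx' hx'₀ (fun i hi => by simp only [hG' i hi.ne]) k le_rfl
  have hnext : x' (k + 1) = x (k + 1) + ε • (B *ᵥ v) := by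
    rw [hx' k, hx k, hxk]
    simp only [G', Function.update_self, Matrix.mul_add, add_mulVec, Matrix.mul_smul,
      smul_mulVec, ← mulVec_mulVec, v]
    abel
  have hcost := lqCost_eq_of_forall_ne hk hPterm hP hx hx rfl fun _ _ => rfl
  have hcost' := lqCost_eq_of_forall_ne hk hPterm hP hx hx' hx'₀ hG'
  have hle := hopt ε x' hx'₀ hx'
  rw [hcost, hcost', hnext, show G' k = G k + ε • D from Function.update_self .., stageCost,
    stageCost, add_mulVec, smul_mulVec, dotProduct_mulVec_add_smul hR,
    dotProduct_mulVec_add_smul hPk] at hle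
  linarith

end FirstOrder

/-- Output-feedback first-order necessary conditions for an
optimal sequence of block-diagonal output gains
`K^y(k) = diag(K^y₁(k), K^y₂(k))` with `H = diag(H₁, H₂)`. -/
theorem output_feedback_necessary_conditions
    {n₁ n₂ m₁ m₂ p₁ p₂ : ℕ}
    (A : Matrix (Fin n₁ ⊕ Fin n₂) (Fin n₁ ⊕ Fin n₂) ℝ)
    (B : Matrix (Fin n₁ ⊕ Fin n₂) (Fin m₁ ⊕ Fin m₂) ℝ)
    (H₁ : Matrix (Fin p₁) (Fin n₁) ℝ) (H₂ : Matrix (Fin p₂) (Fin n₂) ℝ)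
    (Q PN : Matrix (Fin n₁ ⊕ Fin n₂) (Fin n₁ ⊕ Fin n₂) ℝ)
    (R : Matrix (Fin m₁ ⊕ Fin m₂) (Fin m₁ ⊕ Fin m₂) ℝ)
    (hQpsd : Q.PosSemidef) (hRpsd : R.PosSemidef) (hPNpsd : PN.PosSemidef)
    (N : ℕ)
    -- the optimal output-feedback gains and the closed-loop trajectory
    (K₁ : ℕ → Matrix (Fin m₁) (Fin p₁) ℝ)
    (K₂ : ℕ → Matrix (Fin m₂) (Fin p₂) ℝ)
    (x : ℕ → (Fin n₁ ⊕ Fin n₂) → ℝ)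
    (hx : ∀ k, x (k + 1) =
      (A + B * Matrix.fromBlocks (K₁ k) 0 0 (K₂ k) *
        Matrix.fromBlocks H₁ 0 0 H₂).mulVec (x k))
    -- optimality among all block-diagonal output-feedback gain sequences
    (hopt : ∀ (K₁' : ℕ → Matrix (Fin m₁) (Fin p₁) ℝ)
        (K₂' : ℕ → Matrix (Fin m₂) (Fin p₂) ℝ)
        (x' : ℕ → (Fin n₁ ⊕ Fin n₂) → ℝ),
      x' 0 = x 0 →
      (∀ k, x' (k + 1) =
        (A + B * Matrix.fromBlocks (K₁' k) 0 0 (K₂' k) *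
          Matrix.fromBlocks H₁ 0 0 H₂).mulVec (x' k)) →
      (∑ k ∈ Finset.range (N + 1),
          (x k ⬝ᵥ Q.mulVec (x k) +
            (Matrix.fromBlocks (K₁ k) 0 0 (K₂ k) *
              Matrix.fromBlocks H₁ 0 0 H₂).mulVec (x k) ⬝ᵥ
              R.mulVec ((Matrix.fromBlocks (K₁ k) 0 0 (K₂ k) *
                Matrix.fromBlocks H₁ 0 0 H₂).mulVec (x k)))) +
          x (N + 1) ⬝ᵥ PN.mulVec (x (N + 1)) ≤
        (∑ k ∈ Finset.range (N + 1),
          (x' k ⬝ᵥ Q.mulVec (x' k) +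
            (Matrix.fromBlocks (K₁' k) 0 0 (K₂' k) *
              Matrix.fromBlocks H₁ 0 0 H₂).mulVec (x' k) ⬝ᵥ
              R.mulVec ((Matrix.fromBlocks (K₁' k) 0 0 (K₂' k) *
                Matrix.fromBlocks H₁ 0 0 H₂).mulVec (x' k)))) +
          x' (N + 1) ⬝ᵥ PN.mulVec (x' (N + 1)))
    -- outer-product matrices along the optimal trajectory
    (X11 : ℕ → Matrix (Fin n₁) (Fin n₁) ℝ)
    (X12 : ℕ → Matrix (Fin n₁) (Fin n₂) ℝ)
    (X22 : ℕ → Matrix (Fin n₂) (Fin n₂) ℝ)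
    (hX11 : ∀ k, X11 k =
      vecMulVec (fun i => x k (Sum.inl i)) (fun i => x k (Sum.inl i)))
    (hX12 : ∀ k, X12 k =
      vecMulVec (fun i => x k (Sum.inl i)) (fun i => x k (Sum.inr i)))
    (hX22 : ∀ k, X22 k =
      vecMulVec (fun i => x k (Sum.inr i)) (fun i => x k (Sum.inr i)))
    -- the backward Riccati-type recursion for output feedback
    (P : ℕ → Matrix (Fin n₁ ⊕ Fin n₂) (Fin n₁ ⊕ Fin n₂) ℝ)
    (hPterm : P (N + 1) = PN)
    (hPrec : ∀ k ≤ N, P k =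
      Q + (Matrix.fromBlocks H₁ 0 0 H₂)ᵀ *
            (Matrix.fromBlocks (K₁ k) 0 0 (K₂ k))ᵀ * R *
            Matrix.fromBlocks (K₁ k) 0 0 (K₂ k) * Matrix.fromBlocks H₁ 0 0 H₂ +
        (A + B * Matrix.fromBlocks (K₁ k) 0 0 (K₂ k) *
            Matrix.fromBlocks H₁ 0 0 H₂)ᵀ * P (k + 1) *
          (A + B * Matrix.fromBlocks (K₁ k) 0 0 (K₂ k) *
            Matrix.fromBlocks H₁ 0 0 H₂))
    -- Υ^y(k) = R + BᵀP^y(k+1)B and M^y(k) = BᵀP^y(k+1)A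
    (Υ : ℕ → Matrix (Fin m₁ ⊕ Fin m₂) (Fin m₁ ⊕ Fin m₂) ℝ)
    (M : ℕ → Matrix (Fin m₁ ⊕ Fin m₂) (Fin n₁ ⊕ Fin n₂) ℝ)
    (hΥ : ∀ k, Υ k = R + Bᵀ * P (k + 1) * B)
    (hM : ∀ k, M k = Bᵀ * P (k + 1) * A) :
    ∀ k ≤ N,
      (Υ k).toBlocks₁₁ * K₁ k * H₁ * X11 k * H₁ᵀ +
          (M k).toBlocks₁₁ * X11 k * H₁ᵀ +
          (Υ k).toBlocks₁₂ * K₂ k * H₂ * (X12 k)ᵀ * H₁ᵀ +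
          (M k).toBlocks₁₂ * (X12 k)ᵀ * H₁ᵀ = 0 ∧
      ((Υ k).toBlocks₁₂)ᵀ * K₁ k * H₁ * X12 k * H₂ᵀ +
          (M k).toBlocks₂₁ * X12 k * H₂ᵀ +
          (Υ k).toBlocks₂₂ * K₂ k * H₂ * X22 k * H₂ᵀ +
          (M k).toBlocks₂₂ * X22 k * H₂ᵀ = 0 := by
  intro k hk
  set F := fromBlocks H₁ 0 0 H₂
  set G : ℕ → Matrix (Fin m₁ ⊕ Fin m₂) (Fin n₁ ⊕ Fin n₂) ℝ :=
    fun i => fromBlocks (K₁ i) 0 0 (K₂ i) * F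
  have hxG : IsTrajectory (fun i => A + B * G i) x := fun i => by rw [hx i, Matrix.mul_assoc]
  have hPG : ∀ i ≤ N, P i = lyapunovStep A B Q R (G i) (P (i + 1)) := fun i hi => by
    simp only [hPrec i hi, lyapunovStep, G, transpose_mul, Matrix.mul_assoc]
  have hRs : R.IsSymm := isHermitian_iff_isSymm.mp hRpsd.isHermitian
  have hPs : (P (k + 1)).IsSymm :=
    isSymm_of_lyapunov (isHermitian_iff_isSymm.mp hQpsd.isHermitian) hRs
      (isHermitian_iff_isSymm.mp hPNpsd.isHermitian) hPterm hPG (k + 1) (by omega)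
  have hfoc : ∀ L₁ L₂,
      (fromBlocks L₁ 0 0 L₂ *ᵥ (F *ᵥ x k)) ⬝ᵥ ((Υ k * G k + M k) *ᵥ x k) = 0 := by
    intro L₁ L₂
    rw [mulVec_mulVec, hΥ, hM]
    refine dotProduct_gain_gradient_eq_zero hRs hPs hk hPterm hPG hxG _ fun ε x' hx'₀ hx' => ?_
    have hG' : Function.update G k (G k + ε • (fromBlocks L₁ 0 0 L₂ * F)) = fun i =>
        fromBlocks (Function.update K₁ k (K₁ k + ε • L₁) i) 0 0
          (Function.update K₂ k (K₂ k + ε • L₂) i) * F :=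
      funext fun i => (fromBlocks_update_add_smul_mul K₁ K₂ L₁ L₂ F k ε i).symm
    rw [hG'] at hx' ⊢
    exact hopt _ _ x' hx'₀ fun i => by rw [hx' i, Matrix.mul_assoc]
  have hX : vecMulVec (x k) (x k) = fromBlocks (X11 k) (X12 k) (X12 k)ᵀ (X22 k) := by
    rw [vecMulVec_self_eq_fromBlocks, hX11, hX12, hX22]
    rfl
  have hΥ₁₂ : ((Υ k).toBlocks₁₂)ᵀ = (Υ k).toBlocks₂₁ :=
    toBlocks₁₂_transpose_of_isSymm (by rw [hΥ]; exact hRs.add (hPs.transpose_mul_mul_s14 B))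
  obtain ⟨h₁, h₂⟩ := vecMulVec_diag_blocks_eq_zero hfoc
  rw [vecMulVec_mulVec_mulVec, hX, toBlocks₁₁_blockDiagonal_gain_gradient] at h₁
  rw [vecMulVec_mulVec_mulVec, hX, toBlocks₂₂_blockDiagonal_gain_gradient, ← hΥ₁₂] at h₂
  exact ⟨h₁, h₂⟩
end
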